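/- arXiv:0904.2240 — 2 statements merged into one kernel-verified Lean document; each statement's English description precedes it below -/
import Mathlib

section
/- Suppose Ψ₀, Ψ₁, Ψ₂, Ψ₃, Ψ₄ : ℝ → ℂ have a stationary-type expansion with data (a₀, b₀, b₁, c₀, c₁, c₂, c₃, d₀, d₁, e₀). Then I(r)³ − 27J(r)² = O(r⁻²¹) as r → +∞. (This is the paper's claim that a general asymptotically flat, stationary spacetime satisfies I³ − 27J² ∼ O(r⁻²¹) near null infinity, three orders faster than the naive estimate O(r⁻¹⁸): the coefficients of r⁻¹⁸, r⁻¹⁹ and r⁻²⁰ in I³ − 27J² cancel identically.) -/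
open Filter Asymptotics

/-- The curvature invariant `I = Ψ₀Ψ₄ − 4Ψ₁Ψ₃ + 3Ψ₂²`. -/
noncomputable def curvI (Ψ₀ Ψ₁ Ψ₂ Ψ₃ Ψ₄ : ℝ → ℂ) (r : ℝ) : ℂ :=
  Ψ₀ r * Ψ₄ r - 4 * Ψ₁ r * Ψ₃ r + 3 * (Ψ₂ r) ^ 2

/-- The curvature invariant `J = Ψ₄Ψ₂Ψ₀ + 2Ψ₃Ψ₂Ψ₁ − Ψ₂³ − Ψ₃²Ψ₀ − Ψ₁²Ψ₄`. -/
noncomputable def curvJ (Ψ₀ Ψ₁ Ψ₂ Ψ₃ Ψ₄ : ℝ → ℂ) (r : ℝ) : ℂ :=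
  Ψ₄ r * Ψ₂ r * Ψ₀ r + 2 * Ψ₃ r * Ψ₂ r * Ψ₁ r - (Ψ₂ r) ^ 3
    - (Ψ₃ r) ^ 2 * Ψ₀ r - (Ψ₁ r) ^ 2 * Ψ₄ r

/-- The Weyl scalars of an asymptotically flat stationary spacetime, at a fixed
angle, have a stationary-type expansion with the given coefficient data. -/
def HasStationaryExpansion (Ψ₀ Ψ₁ Ψ₂ Ψ₃ Ψ₄ : ℝ → ℂ)
    (a₀ b₀ b₁ c₀ c₁ c₂ c₃ d₀ d₁ e₀ : ℂ) : Prop :=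
  ((fun r : ℝ => Ψ₀ r - a₀ * (r : ℂ) ^ (-5 : ℤ))
      =O[atTop] fun r : ℝ => r ^ (-6 : ℤ)) ∧
  ((fun r : ℝ => Ψ₁ r - (b₀ * (r : ℂ) ^ (-4 : ℤ) + b₁ * (r : ℂ) ^ (-5 : ℤ)))
      =O[atTop] fun r : ℝ => r ^ (-6 : ℤ)) ∧
  ((fun r : ℝ => Ψ₂ r - (c₀ * (r : ℂ) ^ (-3 : ℤ) + c₁ * (r : ℂ) ^ (-4 : ℤ)
        + c₂ * (r : ℂ) ^ (-5 : ℤ) + c₃ * (r : ℂ) ^ (-6 : ℤ)))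
      =O[atTop] fun r : ℝ => r ^ (-7 : ℤ)) ∧
  ((fun r : ℝ => Ψ₃ r - (d₀ * (r : ℂ) ^ (-4 : ℤ) + d₁ * (r : ℂ) ^ (-5 : ℤ)))
      =O[atTop] fun r : ℝ => r ^ (-6 : ℤ)) ∧
  ((fun r : ℝ => Ψ₄ r - e₀ * (r : ℂ) ^ (-4 : ℤ))
      =O[atTop] fun r : ℝ => r ^ (-5 : ℤ))


private lemma zpow_monoO {m n : ℤ} (h : m ≤ n) :
    (fun r : ℝ => r ^ m) =O[atTop] fun r : ℝ => r ^ n := by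
  apply IsBigO.of_bound 1
  filter_upwards [eventually_ge_atTop (1 : ℝ)] with r hr
  have hr0 : (0 : ℝ) < r := by linarith
  rw [Real.norm_eq_abs, Real.norm_eq_abs, abs_of_pos (zpow_pos hr0 m),
    abs_of_pos (zpow_pos hr0 n), one_mul]
  exact zpow_le_zpow_right₀ hr h

private lemma castpowO (m : ℤ) :
    (fun r : ℝ => ((r : ℂ)) ^ m) =O[atTop] fun r : ℝ => r ^ m := by
  apply IsBigO.of_bound 1
  filter_upwards [eventually_ge_atTop (0 : ℝ)] with r _
  rw [norm_zpow, norm_zpow, Complex.norm_real, Real.norm_eq_abs, one_mul]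

private lemma mulO {f g : ℝ → ℂ} {m n : ℤ}
    (hf : f =O[atTop] fun r : ℝ => r ^ m) (hg : g =O[atTop] fun r : ℝ => r ^ n) :
    (fun r : ℝ => f r * g r) =O[atTop] fun r : ℝ => r ^ (m + n) := by
  refine (hf.mul hg).trans (IsBigO.of_bound 1 ?_)
  filter_upwards [eventually_gt_atTop (0 : ℝ)] with r hr
  rw [zpow_add₀ hr.ne', one_mul]

/-- For a stationary-type expansion, `I³ − 27J² = O(r⁻²¹)` as `r → +∞`. -/
theorem stationary_IJ_falloff (Ψ₀ Ψ₁ Ψ₂ Ψ₃ Ψ₄ : ℝ → ℂ)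
    (a₀ b₀ b₁ c₀ c₁ c₂ c₃ d₀ d₁ e₀ : ℂ)
    (h : HasStationaryExpansion Ψ₀ Ψ₁ Ψ₂ Ψ₃ Ψ₄ a₀ b₀ b₁ c₀ c₁ c₂ c₃ d₀ d₁ e₀) :
    (fun r : ℝ => (curvI Ψ₀ Ψ₁ Ψ₂ Ψ₃ Ψ₄ r) ^ 3 - 27 * (curvJ Ψ₀ Ψ₁ Ψ₂ Ψ₃ Ψ₄ r) ^ 2)
      =O[atTop] fun r : ℝ => r ^ (-21 : ℤ) := by
  obtain ⟨h0', h1', h2', h3', h4'⟩ := h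
  have h0 : Ψ₀ =O[atTop] fun r : ℝ => r ^ (-5 : ℤ) := by
    have := (h0'.trans (zpow_monoO (by norm_num))).add
      ((castpowO (-5)).const_mul_left a₀)
    exact this.congr_left fun r => by ring
  have h1 : Ψ₁ =O[atTop] fun r : ℝ => r ^ (-4 : ℤ) := by
    have := (h1'.trans (zpow_monoO (by norm_num))).add
      (((castpowO (-4)).const_mul_left b₀).add
        (((castpowO (-5)).const_mul_left b₁).trans (zpow_monoO (by norm_num))))
    exact this.congr_left fun r => by ring
  have h2 : Ψ₂ =O[atTop] fun r : ℝ => r ^ (-3 : ℤ) := by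
    have := (h2'.trans (zpow_monoO (by norm_num))).add
      ((((castpowO (-3)).const_mul_left c₀).add
        (((castpowO (-4)).const_mul_left c₁).trans (zpow_monoO (by norm_num)))).add
        ((((castpowO (-5)).const_mul_left c₂).trans (zpow_monoO (by norm_num))).add
          (((castpowO (-6)).const_mul_left c₃).trans (zpow_monoO (by norm_num)))))
    exact this.congr_left fun r => by ring
  have h3 : Ψ₃ =O[atTop] fun r : ℝ => r ^ (-4 : ℤ) := by
    have := (h3'.trans (zpow_monoO (by norm_num))).add
      (((castpowO (-4)).const_mul_left d₀).add
        (((castpowO (-5)).const_mul_left d₁).trans (zpow_monoO (by norm_num))))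
    exact this.congr_left fun r => by ring
  have h4 : Ψ₄ =O[atTop] fun r : ℝ => r ^ (-4 : ℤ) := by
    have := (h4'.trans (zpow_monoO (by norm_num))).add
      ((castpowO (-4)).const_mul_left e₀)
    exact this.congr_left fun r => by ring
  -- building blocks
  have hB : (fun r => Ψ₁ r * Ψ₃ r) =O[atTop] fun r : ℝ => r ^ (-8 : ℤ) := mulO h1 h3
  have hE : (fun r => Ψ₀ r * Ψ₄ r) =O[atTop] fun r : ℝ => r ^ (-9 : ℤ) := mulO h0 h4
  have hMI : (fun r => 3 * (Ψ₂ r) ^ 2 - 4 * (Ψ₁ r * Ψ₃ r))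
      =O[atTop] fun r : ℝ => r ^ (-6 : ℤ) := by
    have h := (((mulO h2 h2).const_mul_left 3).sub
      ((hB.const_mul_left 4).trans (zpow_monoO (by norm_num))))
    exact h.congr_left fun r => by ring
  have hMJ : (fun r => -(Ψ₂ r) ^ 3 + 2 * (Ψ₁ r * Ψ₂ r * Ψ₃ r))
      =O[atTop] fun r : ℝ => r ^ (-9 : ℤ) := by
    have h := (mulO (mulO h2 h2) h2).neg_left.add
      (((mulO (mulO h1 h2) h3).const_mul_left 2).trans (zpow_monoO (by norm_num)))
    exact h.congr_left fun r => by ring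
  have hF : (fun r => Ψ₀ r * Ψ₂ r * Ψ₄ r - (Ψ₃ r) ^ 2 * Ψ₀ r - (Ψ₁ r) ^ 2 * Ψ₄ r)
      =O[atTop] fun r : ℝ => r ^ (-12 : ℤ) := by
    have k1 : (fun r => Ψ₀ r * Ψ₂ r * Ψ₄ r) =O[atTop] fun r : ℝ => r ^ (-12 : ℤ) :=
      (mulO (mulO h0 h2) h4).trans (zpow_monoO (by norm_num))
    have k2 : (fun r => Ψ₃ r * Ψ₃ r * Ψ₀ r) =O[atTop] fun r : ℝ => r ^ (-12 : ℤ) :=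
      (mulO (mulO h3 h3) h0).trans (zpow_monoO (by norm_num))
    have k3 : (fun r => Ψ₁ r * Ψ₁ r * Ψ₄ r) =O[atTop] fun r : ℝ => r ^ (-12 : ℤ) :=
      (mulO (mulO h1 h1) h4).trans (zpow_monoO (by norm_num))
    exact ((k1.sub k2).sub k3).congr_left fun r => by ring
  -- the seven pieces
  have t1 : (fun r => 36 * ((Ψ₂ r) ^ 2 * (Ψ₁ r * Ψ₃ r) ^ 2))
      =O[atTop] fun r : ℝ => r ^ (-21 : ℤ) :=
    (((mulO (mulO h2 h2) (mulO hB hB)).const_mul_left 36).congr_left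
      (fun r => by ring)).trans (zpow_monoO (by norm_num))
  have t2 : (fun r => -(64 * (Ψ₁ r * Ψ₃ r) ^ 3))
      =O[atTop] fun r : ℝ => r ^ (-21 : ℤ) :=
    ((((mulO (mulO hB hB) hB).const_mul_left 64).neg_left).congr_left
      (fun r => by ring)).trans (zpow_monoO (by norm_num))
  have t3 : (fun r => 3 * ((3 * (Ψ₂ r) ^ 2 - 4 * (Ψ₁ r * Ψ₃ r)) ^ 2 * (Ψ₀ r * Ψ₄ r)))
      =O[atTop] fun r : ℝ => r ^ (-21 : ℤ) :=
    (((mulO (mulO hMI hMI) hE).const_mul_left 3).congr_left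
      (fun r => by ring)).trans (zpow_monoO (by norm_num))
  have t4 : (fun r => 3 * ((3 * (Ψ₂ r) ^ 2 - 4 * (Ψ₁ r * Ψ₃ r)) * (Ψ₀ r * Ψ₄ r) ^ 2))
      =O[atTop] fun r : ℝ => r ^ (-21 : ℤ) :=
    (((mulO hMI (mulO hE hE)).const_mul_left 3).congr_left
      (fun r => by ring)).trans (zpow_monoO (by norm_num))
  have t5 : (fun r => (Ψ₀ r * Ψ₄ r) ^ 3)
      =O[atTop] fun r : ℝ => r ^ (-21 : ℤ) :=
    ((mulO (mulO hE hE) hE).congr_left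
      (fun r => by ring)).trans (zpow_monoO (by norm_num))
  have t6 : (fun r => -(54 * ((-(Ψ₂ r) ^ 3 + 2 * (Ψ₁ r * Ψ₂ r * Ψ₃ r)) *
        (Ψ₀ r * Ψ₂ r * Ψ₄ r - (Ψ₃ r) ^ 2 * Ψ₀ r - (Ψ₁ r) ^ 2 * Ψ₄ r))))
      =O[atTop] fun r : ℝ => r ^ (-21 : ℤ) :=
    ((((mulO hMJ hF).const_mul_left 54).neg_left).congr_left
      (fun r => by ring)).trans (zpow_monoO (by norm_num))
  have t7 : (fun r => -(27 * (Ψ₀ r * Ψ₂ r * Ψ₄ r - (Ψ₃ r) ^ 2 * Ψ₀ r - (Ψ₁ r) ^ 2 * Ψ₄ r) ^ 2))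
      =O[atTop] fun r : ℝ => r ^ (-21 : ℤ) :=
    ((((mulO hF hF).const_mul_left 27).neg_left).congr_left
      (fun r => by ring)).trans (zpow_monoO (by norm_num))
  have total := ((((((t1.add t2).add t3).add t4).add t5).add t6).add t7)
  refine total.congr_left fun r => ?_
  simp only [curvI, curvJ]
  ring
end

section
/- Suppose Ψ₀, Ψ₁, Ψ₂, Ψ₃, Ψ₄ : ℝ → ℂ have a stationary-type expansion with data (a₀, b₀, b₁, c₀, c₁, c₂, c₃, d₀, d₁, e₀). Then the asymptotically algebraically special condition I(r)³ − 27J(r)² = O(r⁻²²) (as r → +∞) holds if and only if c₀³·e₀·(3a₀c₀ − 2b₀²) = 0. In particular, if c₀ ≠ 0 and e₀ ≠ 0, the asymptotically algebraically special condition is equivalent to the relation 3Ψ₀⁰Ψ₂⁰ = 2(Ψ₁⁰)² between the Janis–Newman dipole and quadrupole data. -/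
open Filter Asymptotics

lemma zpowC_O {a b : ℤ} (h : a ≤ b) :
    (fun r : ℝ => (r:ℂ) ^ a) =O[atTop] fun r : ℝ => r ^ b := by
  refine IsBigO.of_bound 1 ?_
  filter_upwards [eventually_ge_atTop (1:ℝ)] with r hr
  have hr0 : (0:ℝ) < r := lt_of_lt_of_le one_pos hr
  have h1 : ‖(r:ℂ) ^ a‖ = r ^ a := by
    rw [norm_zpow, Complex.norm_real, Real.norm_eq_abs, abs_of_pos hr0]
  have h2 : ‖(r:ℝ) ^ b‖ = r ^ b := by
    rw [Real.norm_eq_abs, abs_of_pos (zpow_pos hr0 b)]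
  rw [one_mul, h1, h2]
  exact zpow_le_zpow_right₀ hr h

lemma zpowR_O {a b : ℤ} (h : a ≤ b) :
    (fun r : ℝ => r ^ a) =O[atTop] fun r : ℝ => r ^ b := by
  refine IsBigO.of_bound 1 ?_
  filter_upwards [eventually_ge_atTop (1:ℝ)] with r hr
  have hr0 : (0:ℝ) < r := lt_of_lt_of_le one_pos hr
  have h1 : ‖(r:ℝ) ^ a‖ = r ^ a := by
    rw [Real.norm_eq_abs, abs_of_pos (zpow_pos hr0 a)]
  have h2 : ‖(r:ℝ) ^ b‖ = r ^ b := by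
    rw [Real.norm_eq_abs, abs_of_pos (zpow_pos hr0 b)]
  rw [one_mul, h1, h2]
  exact zpow_le_zpow_right₀ hr h

lemma O_mon (K : ℂ) {a c : ℤ} (hc : a ≤ c) :
    (fun r : ℝ => K * (r:ℂ) ^ a) =O[atTop] fun r : ℝ => r ^ c :=
  (zpowC_O hc).const_mul_left K

lemma O_mul {f g : ℝ → ℂ} {a b c : ℤ}
    (hf : f =O[atTop] fun r : ℝ => r ^ a) (hg : g =O[atTop] fun r : ℝ => r ^ b)
    (hc : a + b ≤ c) :
    (fun r => f r * g r) =O[atTop] fun r : ℝ => r ^ c := by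
  refine (hf.mul hg).trans (IsBigO.trans ?_ (zpowR_O hc))
  refine Filter.EventuallyEq.isBigO ?_
  filter_upwards [eventually_gt_atTop (0:ℝ)] with r hr
  rw [← zpow_add₀ (ne_of_gt hr)]

-- the y-conversion helper
lemma ypow (r : ℂ) : ∀ k : ℕ, r ^ (-(k:ℤ)) = (r⁻¹) ^ k := fun k => by
  simp only [zpow_neg, inv_pow, inv_inj]; norm_cast

lemma key_lemma (α₀ α₁ α₂ α₃ β₀ β₁ β₂ β₃ KK : ℂ)
    (h18 : α₀^3 - 27*β₀^2 = 0) (h19 : 3*α₀^2*α₁ - 54*β₀*β₁ = 0)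
    (h20 : 3*α₀^2*α₂ + 3*α₀*α₁^2 - 27*β₁^2 - 54*β₀*β₂ = 0)
    (h21 : 3*α₀^2*α₃ + 6*α₀*α₁*α₂ + α₁^3 - 54*β₀*β₃ - 54*β₁*β₂ = KK) :
    (fun r : ℝ =>
      (α₀*(r:ℂ)^(-6:ℤ) + α₁*(r:ℂ)^(-7:ℤ) + α₂*(r:ℂ)^(-8:ℤ) + α₃*(r:ℂ)^(-9:ℤ))^3
      - 27*(β₀*(r:ℂ)^(-9:ℤ) + β₁*(r:ℂ)^(-10:ℤ) + β₂*(r:ℂ)^(-11:ℤ) + β₃*(r:ℂ)^(-12:ℤ))^2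
      - KK*(r:ℂ)^(-21:ℤ)) =O[atTop] fun r : ℝ => r ^ (-22:ℤ) := by
  have heq : (fun r : ℝ =>
      (α₀*(r:ℂ)^(-6:ℤ) + α₁*(r:ℂ)^(-7:ℤ) + α₂*(r:ℂ)^(-8:ℤ) + α₃*(r:ℂ)^(-9:ℤ))^3
      - 27*(β₀*(r:ℂ)^(-9:ℤ) + β₁*(r:ℂ)^(-10:ℤ) + β₂*(r:ℂ)^(-11:ℤ) + β₃*(r:ℂ)^(-12:ℤ))^2
      - KK*(r:ℂ)^(-21:ℤ)) =ᶠ[atTop] (fun r : ℝ =>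
        (6*α₀*α₁*α₃ + 3*α₀*α₂^2 + 3*α₁^2*α₂ - 54*β₁*β₃ - 27*β₂^2)*(r:ℂ)^(-22:ℤ)
      + (3*α₁^2*α₃ + 3*α₁*α₂^2 + 6*α₀*α₂*α₃ - 54*β₂*β₃)*(r:ℂ)^(-23:ℤ)
      + (3*α₀*α₃^2 + 6*α₁*α₂*α₃ + α₂^3 - 27*β₃^2)*(r:ℂ)^(-24:ℤ)
      + (3*α₁*α₃^2 + 3*α₂^2*α₃)*(r:ℂ)^(-25:ℤ)
      + (3*α₂*α₃^2)*(r:ℂ)^(-26:ℤ)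
      + (α₃^3)*(r:ℂ)^(-27:ℤ)) := by
    filter_upwards [eventually_ge_atTop (1:ℝ)] with r hr
    have e6 : (r:ℂ)^(-6:ℤ) = ((r:ℂ)⁻¹)^6 := by rw [show (-6:ℤ) = -((6:ℕ):ℤ) by norm_num, ypow]
    have e7 : (r:ℂ)^(-7:ℤ) = ((r:ℂ)⁻¹)^7 := by rw [show (-7:ℤ) = -((7:ℕ):ℤ) by norm_num, ypow]
    have e8 : (r:ℂ)^(-8:ℤ) = ((r:ℂ)⁻¹)^8 := by rw [show (-8:ℤ) = -((8:ℕ):ℤ) by norm_num, ypow]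
    have e9 : (r:ℂ)^(-9:ℤ) = ((r:ℂ)⁻¹)^9 := by rw [show (-9:ℤ) = -((9:ℕ):ℤ) by norm_num, ypow]
    have e10 : (r:ℂ)^(-10:ℤ) = ((r:ℂ)⁻¹)^10 := by rw [show (-10:ℤ) = -((10:ℕ):ℤ) by norm_num, ypow]
    have e11 : (r:ℂ)^(-11:ℤ) = ((r:ℂ)⁻¹)^11 := by rw [show (-11:ℤ) = -((11:ℕ):ℤ) by norm_num, ypow]
    have e12 : (r:ℂ)^(-12:ℤ) = ((r:ℂ)⁻¹)^12 := by rw [show (-12:ℤ) = -((12:ℕ):ℤ) by norm_num, ypow]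
    have e21 : (r:ℂ)^(-21:ℤ) = ((r:ℂ)⁻¹)^21 := by rw [show (-21:ℤ) = -((21:ℕ):ℤ) by norm_num, ypow]
    have e22 : (r:ℂ)^(-22:ℤ) = ((r:ℂ)⁻¹)^22 := by rw [show (-22:ℤ) = -((22:ℕ):ℤ) by norm_num, ypow]
    have e23 : (r:ℂ)^(-23:ℤ) = ((r:ℂ)⁻¹)^23 := by rw [show (-23:ℤ) = -((23:ℕ):ℤ) by norm_num, ypow]
    have e24 : (r:ℂ)^(-24:ℤ) = ((r:ℂ)⁻¹)^24 := by rw [show (-24:ℤ) = -((24:ℕ):ℤ) by norm_num, ypow]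
    have e25 : (r:ℂ)^(-25:ℤ) = ((r:ℂ)⁻¹)^25 := by rw [show (-25:ℤ) = -((25:ℕ):ℤ) by norm_num, ypow]
    have e26 : (r:ℂ)^(-26:ℤ) = ((r:ℂ)⁻¹)^26 := by rw [show (-26:ℤ) = -((26:ℕ):ℤ) by norm_num, ypow]
    have e27 : (r:ℂ)^(-27:ℤ) = ((r:ℂ)⁻¹)^27 := by rw [show (-27:ℤ) = -((27:ℕ):ℤ) by norm_num, ypow]
    rw [e6, e7, e8, e9, e10, e11, e12, e21, e22, e23, e24, e25, e26, e27]
    set y := (r:ℂ)⁻¹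
    linear_combination (y^18)*h18 + (y^19)*h19 + (y^20)*h20 + (y^21)*h21
  refine heq.trans_isBigO ?_
  exact (((((O_mon _ (by norm_num)).add (O_mon _ (by norm_num))).add
    (O_mon _ (by norm_num))).add (O_mon _ (by norm_num))).add
    (O_mon _ (by norm_num))).add (O_mon _ (by norm_num))

lemma const_zpow_eq_zero {K : ℂ}
    (h : (fun r : ℝ => K * (r:ℂ)^(-21:ℤ)) =O[atTop] fun r : ℝ => r^(-22:ℤ)) : K = 0 := by
  by_contra hK
  have hKpos : 0 < ‖K‖ := norm_pos_iff.mpr hK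
  obtain ⟨C, hC⟩ := h.bound
  rw [eventually_atTop] at hC
  obtain ⟨N, hN⟩ := hC
  set R : ℝ := max (max N 1) ((C+1)/‖K‖) with hRdef
  have hR1 : (1:ℝ) ≤ R := le_trans (le_max_right N 1) (le_max_left _ _)
  have hR0 : (0:ℝ) < R := lt_of_lt_of_le one_pos hR1
  have hb := hN R (le_trans (le_max_left N 1) (le_max_left _ _))
  have n1 : ‖K * (R:ℂ)^(-21:ℤ)‖ = ‖K‖ * R^(-21:ℤ) := by
    rw [norm_mul, norm_zpow, Complex.norm_real, Real.norm_eq_abs, abs_of_pos hR0]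
  have n2 : ‖R^(-22:ℤ)‖ = R^(-22:ℤ) := by
    rw [Real.norm_eq_abs, abs_of_pos (zpow_pos hR0 _)]
  rw [n1, n2] at hb
  have e1 : R^(-21:ℤ) * R^(22:ℤ) = R := by
    rw [← zpow_add₀ (ne_of_gt hR0)]; norm_num
  have e2 : R^(-22:ℤ) * R^(22:ℤ) = 1 := by
    rw [← zpow_add₀ (ne_of_gt hR0)]; norm_num
  have hb2 := mul_le_mul_of_nonneg_right hb (le_of_lt (zpow_pos hR0 (22:ℤ)))
  rw [mul_assoc, e1, mul_assoc, e2, mul_one] at hb2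
  have h3 : (C+1)/‖K‖ ≤ R := le_max_right _ _
  rw [div_le_iff₀ hKpos] at h3
  nlinarith [hb2, h3]


set_option maxHeartbeats 1000000 in
/-- For a stationary-type expansion, the asymptotically algebraically special
condition `I³ − 27J² = O(r⁻²²)` holds iff `c₀³e₀(3a₀c₀ − 2b₀²) = 0`; in
particular, when `c₀ ≠ 0` and `e₀ ≠ 0` it is equivalent to the Janis–Newman
dipole/quadrupole relation `3Ψ₀⁰Ψ₂⁰ = 2(Ψ₁⁰)²`. -/
theorem stationary_AASC_iff (Ψ₀ Ψ₁ Ψ₂ Ψ₃ Ψ₄ : ℝ → ℂ)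
    (a₀ b₀ b₁ c₀ c₁ c₂ c₃ d₀ d₁ e₀ : ℂ)
    (h : HasStationaryExpansion Ψ₀ Ψ₁ Ψ₂ Ψ₃ Ψ₄ a₀ b₀ b₁ c₀ c₁ c₂ c₃ d₀ d₁ e₀) :
    (((fun r : ℝ => (curvI Ψ₀ Ψ₁ Ψ₂ Ψ₃ Ψ₄ r) ^ 3 - 27 * (curvJ Ψ₀ Ψ₁ Ψ₂ Ψ₃ Ψ₄ r) ^ 2)
        =O[atTop] fun r : ℝ => r ^ (-22 : ℤ))
      ↔ c₀ ^ 3 * e₀ * (3 * a₀ * c₀ - 2 * b₀ ^ 2) = 0) ∧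
    (c₀ ≠ 0 → e₀ ≠ 0 →
      (((fun r : ℝ => (curvI Ψ₀ Ψ₁ Ψ₂ Ψ₃ Ψ₄ r) ^ 3 - 27 * (curvJ Ψ₀ Ψ₁ Ψ₂ Ψ₃ Ψ₄ r) ^ 2)
          =O[atTop] fun r : ℝ => r ^ (-22 : ℤ))
        ↔ 3 * a₀ * c₀ = 2 * b₀ ^ 2)) := by
  obtain ⟨h0, h1, h2, h3, h4⟩ := h
  have bM1 : (fun r : ℝ => b₀ * (r:ℂ)^(-4:ℤ) + b₁ * (r:ℂ)^(-5:ℤ)) =O[atTop] fun r : ℝ => r^(-4:ℤ) :=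
    (O_mon b₀ (show (-4:ℤ) ≤ (-4:ℤ) by norm_num)).add (O_mon b₁ (show (-5:ℤ) ≤ (-4:ℤ) by norm_num))
  have bM2 : (fun r : ℝ => c₀ * (r:ℂ)^(-3:ℤ) + c₁ * (r:ℂ)^(-4:ℤ) + c₂ * (r:ℂ)^(-5:ℤ) + c₃ * (r:ℂ)^(-6:ℤ)) =O[atTop] fun r : ℝ => r^(-3:ℤ) :=
    (((O_mon c₀ (show (-3:ℤ) ≤ (-3:ℤ) by norm_num)).add (O_mon c₁ (show (-4:ℤ) ≤ (-3:ℤ) by norm_num))).add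
      (O_mon c₂ (show (-5:ℤ) ≤ (-3:ℤ) by norm_num))).add (O_mon c₃ (show (-6:ℤ) ≤ (-3:ℤ) by norm_num))
  have bM3 : (fun r : ℝ => d₀ * (r:ℂ)^(-4:ℤ) + d₁ * (r:ℂ)^(-5:ℤ)) =O[atTop] fun r : ℝ => r^(-4:ℤ) :=
    (O_mon d₀ (show (-4:ℤ) ≤ (-4:ℤ) by norm_num)).add (O_mon d₁ (show (-5:ℤ) ≤ (-4:ℤ) by norm_num))
  have bP0 : Ψ₀ =O[atTop] fun r : ℝ => r^(-5:ℤ) :=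
    ((h0.trans (zpowR_O (by norm_num))).add (O_mon a₀ (show (-5:ℤ) ≤ (-5:ℤ) by norm_num))).congr_left
      (fun r => by ring)
  have bP1 : Ψ₁ =O[atTop] fun r : ℝ => r^(-4:ℤ) :=
    ((h1.trans (zpowR_O (by norm_num))).add bM1).congr_left (fun r => by ring)
  have bP2 : Ψ₂ =O[atTop] fun r : ℝ => r^(-3:ℤ) :=
    ((h2.trans (zpowR_O (by norm_num))).add bM2).congr_left (fun r => by ring)
  have bP3 : Ψ₃ =O[atTop] fun r : ℝ => r^(-4:ℤ) :=
    ((h3.trans (zpowR_O (by norm_num))).add bM3).congr_left (fun r => by ring)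
  have bP4 : Ψ₄ =O[atTop] fun r : ℝ => r^(-4:ℤ) :=
    ((h4.trans (zpowR_O (by norm_num))).add (O_mon e₀ (show (-4:ℤ) ≤ (-4:ℤ) by norm_num))).congr_left
      (fun r => by ring)
  have bF : (fun r : ℝ => (3*c₀^2)*(r:ℂ)^(-6:ℤ) + (6*c₀*c₁)*(r:ℂ)^(-7:ℤ) + (3*c₁^2 + 6*c₀*c₂ - 4*b₀*d₀)*(r:ℂ)^(-8:ℤ) + (6*c₁*c₂ + 6*c₀*c₃ - 4*b₁*d₀ - 4*b₀*d₁ + a₀*e₀)*(r:ℂ)^(-9:ℤ)) =O[atTop] fun r : ℝ => r^(-6:ℤ) :=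
    (((O_mon _ (show (-6:ℤ) ≤ (-6:ℤ) by norm_num)).add (O_mon _ (show (-7:ℤ) ≤ (-6:ℤ) by norm_num))).add
      (O_mon _ (show (-8:ℤ) ≤ (-6:ℤ) by norm_num))).add (O_mon _ (show (-9:ℤ) ≤ (-6:ℤ) by norm_num))
  have bG : (fun r : ℝ => (-c₀^3)*(r:ℂ)^(-9:ℤ) + (-(3*c₀^2*c₁))*(r:ℂ)^(-10:ℤ) + (-(3*c₀*c₁^2) - 3*c₀^2*c₂ + 2*b₀*c₀*d₀)*(r:ℂ)^(-11:ℤ) + (-c₁^3 - 6*c₀*c₁*c₂ - 3*c₀^2*c₃ + 2*b₁*c₀*d₀ + 2*b₀*c₁*d₀ + 2*b₀*c₀*d₁ - b₀^2*e₀ + a₀*c₀*e₀)*(r:ℂ)^(-12:ℤ)) =O[atTop] fun r : ℝ => r^(-9:ℤ) :=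
    (((O_mon _ (show (-9:ℤ) ≤ (-9:ℤ) by norm_num)).add (O_mon _ (show (-10:ℤ) ≤ (-9:ℤ) by norm_num))).add
      (O_mon _ (show (-11:ℤ) ≤ (-9:ℤ) by norm_num))).add (O_mon _ (show (-12:ℤ) ≤ (-9:ℤ) by norm_num))
  -- curvI − F = O(r⁻¹⁰)
  have hIF : (fun r : ℝ => curvI Ψ₀ Ψ₁ Ψ₂ Ψ₃ Ψ₄ r - ((3*c₀^2)*(r:ℂ)^(-6:ℤ) + (6*c₀*c₁)*(r:ℂ)^(-7:ℤ) + (3*c₁^2 + 6*c₀*c₂ - 4*b₀*d₀)*(r:ℂ)^(-8:ℤ) + (6*c₁*c₂ + 6*c₀*c₃ - 4*b₁*d₀ - 4*b₀*d₁ + a₀*e₀)*(r:ℂ)^(-9:ℤ)))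
      =O[atTop] fun r : ℝ => r^(-10:ℤ) := by
    have heq : (fun r : ℝ => curvI Ψ₀ Ψ₁ Ψ₂ Ψ₃ Ψ₄ r - ((3*c₀^2)*(r:ℂ)^(-6:ℤ) + (6*c₀*c₁)*(r:ℂ)^(-7:ℤ) + (3*c₁^2 + 6*c₀*c₂ - 4*b₀*d₀)*(r:ℂ)^(-8:ℤ) + (6*c₁*c₂ + 6*c₀*c₃ - 4*b₁*d₀ - 4*b₀*d₁ + a₀*e₀)*(r:ℂ)^(-9:ℤ))) =ᶠ[atTop]
        (fun r : ℝ =>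
          (Ψ₀ r - a₀ * (r:ℂ)^(-5:ℤ)) * Ψ₄ r
          + (a₀ * (r:ℂ)^(-5:ℤ)) * (Ψ₄ r - e₀ * (r:ℂ)^(-4:ℤ))
          + (-4 : ℂ) * ((Ψ₁ r - (b₀ * (r:ℂ)^(-4:ℤ) + b₁ * (r:ℂ)^(-5:ℤ))) * Ψ₃ r + (b₀ * (r:ℂ)^(-4:ℤ) + b₁ * (r:ℂ)^(-5:ℤ)) * (Ψ₃ r - (d₀ * (r:ℂ)^(-4:ℤ) + d₁ * (r:ℂ)^(-5:ℤ))))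
          + (3 : ℂ) * ((Ψ₂ r - (c₀ * (r:ℂ)^(-3:ℤ) + c₁ * (r:ℂ)^(-4:ℤ) + c₂ * (r:ℂ)^(-5:ℤ) + c₃ * (r:ℂ)^(-6:ℤ))) * (Ψ₂ r + (c₀ * (r:ℂ)^(-3:ℤ) + c₁ * (r:ℂ)^(-4:ℤ) + c₂ * (r:ℂ)^(-5:ℤ) + c₃ * (r:ℂ)^(-6:ℤ))))
          + ((3*c₂^2 + 6*c₁*c₃ - 4*b₁*d₁)*(r:ℂ)^(-10:ℤ) + (6*c₂*c₃)*(r:ℂ)^(-11:ℤ) + (3*c₃^2)*(r:ℂ)^(-12:ℤ))) := by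
      filter_upwards [eventually_ge_atTop (1:ℝ)] with r hr
      simp only [curvI]
      have e3 : (r:ℂ)^(-3:ℤ) = ((r:ℂ)⁻¹)^3 := by rw [show (-3:ℤ) = -((3:ℕ):ℤ) by norm_num, ypow]
      have e4 : (r:ℂ)^(-4:ℤ) = ((r:ℂ)⁻¹)^4 := by rw [show (-4:ℤ) = -((4:ℕ):ℤ) by norm_num, ypow]
      have e5 : (r:ℂ)^(-5:ℤ) = ((r:ℂ)⁻¹)^5 := by rw [show (-5:ℤ) = -((5:ℕ):ℤ) by norm_num, ypow]
      have e6 : (r:ℂ)^(-6:ℤ) = ((r:ℂ)⁻¹)^6 := by rw [show (-6:ℤ) = -((6:ℕ):ℤ) by norm_num, ypow]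
      have e7 : (r:ℂ)^(-7:ℤ) = ((r:ℂ)⁻¹)^7 := by rw [show (-7:ℤ) = -((7:ℕ):ℤ) by norm_num, ypow]
      have e8 : (r:ℂ)^(-8:ℤ) = ((r:ℂ)⁻¹)^8 := by rw [show (-8:ℤ) = -((8:ℕ):ℤ) by norm_num, ypow]
      have e9 : (r:ℂ)^(-9:ℤ) = ((r:ℂ)⁻¹)^9 := by rw [show (-9:ℤ) = -((9:ℕ):ℤ) by norm_num, ypow]
      have e10 : (r:ℂ)^(-10:ℤ) = ((r:ℂ)⁻¹)^10 := by rw [show (-10:ℤ) = -((10:ℕ):ℤ) by norm_num, ypow]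
      have e11 : (r:ℂ)^(-11:ℤ) = ((r:ℂ)⁻¹)^11 := by rw [show (-11:ℤ) = -((11:ℕ):ℤ) by norm_num, ypow]
      have e12 : (r:ℂ)^(-12:ℤ) = ((r:ℂ)⁻¹)^12 := by rw [show (-12:ℤ) = -((12:ℕ):ℤ) by norm_num, ypow]
      rw [e3, e4, e5, e6, e7, e8, e9, e10, e11, e12]
      ring
    have p1 := O_mul h0 bP4 (show (-6:ℤ) + (-4:ℤ) ≤ (-10:ℤ) by norm_num)
    have p2 := O_mul (O_mon a₀ (show (-5:ℤ) ≤ (-5:ℤ) by norm_num)) h4 (show (-5:ℤ) + (-5:ℤ) ≤ (-10:ℤ) by norm_num)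
    have p3 := ((O_mul h1 bP3 (show (-6:ℤ) + (-4:ℤ) ≤ (-10:ℤ) by norm_num)).add
      (O_mul bM1 h3 (show (-4:ℤ) + (-6:ℤ) ≤ (-10:ℤ) by norm_num))).const_mul_left ((-4 : ℂ))
    have p4 := (O_mul h2 (bP2.add bM2) (show (-7:ℤ) + (-3:ℤ) ≤ (-10:ℤ) by norm_num)).const_mul_left ((3 : ℂ))
    have p5 := ((O_mon (3*c₂^2 + 6*c₁*c₃ - 4*b₁*d₁) (show (-10:ℤ) ≤ (-10:ℤ) by norm_num)).add
      (O_mon (6*c₂*c₃) (show (-11:ℤ) ≤ (-10:ℤ) by norm_num))).add (O_mon (3*c₃^2) (show (-12:ℤ) ≤ (-10:ℤ) by norm_num))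
    exact heq.trans_isBigO (((((p1.add p2).add p3).add p4).add p5).congr_left
      (fun r => by ring))
  -- curvJ − G = O(r⁻¹³)
  have hJG : (fun r : ℝ => curvJ Ψ₀ Ψ₁ Ψ₂ Ψ₃ Ψ₄ r - ((-c₀^3)*(r:ℂ)^(-9:ℤ) + (-(3*c₀^2*c₁))*(r:ℂ)^(-10:ℤ) + (-(3*c₀*c₁^2) - 3*c₀^2*c₂ + 2*b₀*c₀*d₀)*(r:ℂ)^(-11:ℤ) + (-c₁^3 - 6*c₀*c₁*c₂ - 3*c₀^2*c₃ + 2*b₁*c₀*d₀ + 2*b₀*c₁*d₀ + 2*b₀*c₀*d₁ - b₀^2*e₀ + a₀*c₀*e₀)*(r:ℂ)^(-12:ℤ)))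
      =O[atTop] fun r : ℝ => r^(-13:ℤ) := by
    have heq : (fun r : ℝ => curvJ Ψ₀ Ψ₁ Ψ₂ Ψ₃ Ψ₄ r - ((-c₀^3)*(r:ℂ)^(-9:ℤ) + (-(3*c₀^2*c₁))*(r:ℂ)^(-10:ℤ) + (-(3*c₀*c₁^2) - 3*c₀^2*c₂ + 2*b₀*c₀*d₀)*(r:ℂ)^(-11:ℤ) + (-c₁^3 - 6*c₀*c₁*c₂ - 3*c₀^2*c₃ + 2*b₁*c₀*d₀ + 2*b₀*c₁*d₀ + 2*b₀*c₀*d₁ - b₀^2*e₀ + a₀*c₀*e₀)*(r:ℂ)^(-12:ℤ))) =ᶠ[atTop]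
        (fun r : ℝ =>
          ((Ψ₄ r - e₀ * (r:ℂ)^(-4:ℤ)) * (Ψ₂ r * Ψ₀ r)
            + (e₀ * (r:ℂ)^(-4:ℤ)) * ((Ψ₂ r - (c₀ * (r:ℂ)^(-3:ℤ) + c₁ * (r:ℂ)^(-4:ℤ) + c₂ * (r:ℂ)^(-5:ℤ) + c₃ * (r:ℂ)^(-6:ℤ))) * Ψ₀ r)
            + (e₀ * (r:ℂ)^(-4:ℤ)) * (c₀ * (r:ℂ)^(-3:ℤ) + c₁ * (r:ℂ)^(-4:ℤ) + c₂ * (r:ℂ)^(-5:ℤ) + c₃ * (r:ℂ)^(-6:ℤ)) * (Ψ₀ r - a₀ * (r:ℂ)^(-5:ℤ)))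
          + (2 : ℂ) * ((Ψ₃ r - (d₀ * (r:ℂ)^(-4:ℤ) + d₁ * (r:ℂ)^(-5:ℤ))) * (Ψ₂ r * Ψ₁ r)
            + ((d₀ * (r:ℂ)^(-4:ℤ) + d₁ * (r:ℂ)^(-5:ℤ)) * ((Ψ₂ r - (c₀ * (r:ℂ)^(-3:ℤ) + c₁ * (r:ℂ)^(-4:ℤ) + c₂ * (r:ℂ)^(-5:ℤ) + c₃ * (r:ℂ)^(-6:ℤ))) * Ψ₁ r)
              + (d₀ * (r:ℂ)^(-4:ℤ) + d₁ * (r:ℂ)^(-5:ℤ)) * (c₀ * (r:ℂ)^(-3:ℤ) + c₁ * (r:ℂ)^(-4:ℤ) + c₂ * (r:ℂ)^(-5:ℤ) + c₃ * (r:ℂ)^(-6:ℤ)) * (Ψ₁ r - (b₀ * (r:ℂ)^(-4:ℤ) + b₁ * (r:ℂ)^(-5:ℤ)))))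
          + (-1 : ℂ) * ((Ψ₂ r - (c₀ * (r:ℂ)^(-3:ℤ) + c₁ * (r:ℂ)^(-4:ℤ) + c₂ * (r:ℂ)^(-5:ℤ) + c₃ * (r:ℂ)^(-6:ℤ))) *
              (Ψ₂ r * Ψ₂ r + Ψ₂ r * (c₀ * (r:ℂ)^(-3:ℤ) + c₁ * (r:ℂ)^(-4:ℤ) + c₂ * (r:ℂ)^(-5:ℤ) + c₃ * (r:ℂ)^(-6:ℤ)) + (c₀ * (r:ℂ)^(-3:ℤ) + c₁ * (r:ℂ)^(-4:ℤ) + c₂ * (r:ℂ)^(-5:ℤ) + c₃ * (r:ℂ)^(-6:ℤ)) * (c₀ * (r:ℂ)^(-3:ℤ) + c₁ * (r:ℂ)^(-4:ℤ) + c₂ * (r:ℂ)^(-5:ℤ) + c₃ * (r:ℂ)^(-6:ℤ))))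
          + (-1 : ℂ) * ((Ψ₃ r - (d₀ * (r:ℂ)^(-4:ℤ) + d₁ * (r:ℂ)^(-5:ℤ))) * (Ψ₃ r * Ψ₀ r)
            + ((d₀ * (r:ℂ)^(-4:ℤ) + d₁ * (r:ℂ)^(-5:ℤ)) * ((Ψ₃ r - (d₀ * (r:ℂ)^(-4:ℤ) + d₁ * (r:ℂ)^(-5:ℤ))) * Ψ₀ r)
              + (d₀ * (r:ℂ)^(-4:ℤ) + d₁ * (r:ℂ)^(-5:ℤ)) * (d₀ * (r:ℂ)^(-4:ℤ) + d₁ * (r:ℂ)^(-5:ℤ)) * (Ψ₀ r - a₀ * (r:ℂ)^(-5:ℤ))))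
          + (-1 : ℂ) * ((Ψ₁ r - (b₀ * (r:ℂ)^(-4:ℤ) + b₁ * (r:ℂ)^(-5:ℤ))) * (Ψ₁ r * Ψ₄ r)
            + ((b₀ * (r:ℂ)^(-4:ℤ) + b₁ * (r:ℂ)^(-5:ℤ)) * ((Ψ₁ r - (b₀ * (r:ℂ)^(-4:ℤ) + b₁ * (r:ℂ)^(-5:ℤ))) * Ψ₄ r)
              + (b₀ * (r:ℂ)^(-4:ℤ) + b₁ * (r:ℂ)^(-5:ℤ)) * (b₀ * (r:ℂ)^(-4:ℤ) + b₁ * (r:ℂ)^(-5:ℤ)) * (Ψ₄ r - e₀ * (r:ℂ)^(-4:ℤ))))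
          + ((-(3*c₁^2*c₂) - 3*c₀*c₂^2 - 6*c₀*c₁*c₃ + 2*b₁*c₁*d₀ + 2*b₁*c₀*d₁ + 2*b₀*c₂*d₀ + 2*b₀*c₁*d₁ - 2*b₀*b₁*e₀ - a₀*d₀^2 + a₀*c₁*e₀)*(r:ℂ)^(-13:ℤ) + (-(3*c₁*c₂^2) - 3*c₁^2*c₃ - 6*c₀*c₂*c₃ + 2*b₁*c₂*d₀ + 2*b₁*c₁*d₁ - b₁^2*e₀ + 2*b₀*c₃*d₀ + 2*b₀*c₂*d₁ - 2*a₀*d₀*d₁ + a₀*c₂*e₀)*(r:ℂ)^(-14:ℤ) + (-c₂^3 - 6*c₁*c₂*c₃ - 3*c₀*c₃^2 + 2*b₁*c₃*d₀ + 2*b₁*c₂*d₁ + 2*b₀*c₃*d₁ - a₀*d₁^2 + a₀*c₃*e₀)*(r:ℂ)^(-15:ℤ) + (-(3*c₂^2*c₃) - 3*c₁*c₃^2 + 2*b₁*c₃*d₁)*(r:ℂ)^(-16:ℤ) + (-(3*c₂*c₃^2))*(r:ℂ)^(-17:ℤ) + (-c₃^3)*(r:ℂ)^(-18:ℤ)))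 := by
      filter_upwards [eventually_ge_atTop (1:ℝ)] with r hr
      simp only [curvJ]
      have e3 : (r:ℂ)^(-3:ℤ) = ((r:ℂ)⁻¹)^3 := by rw [show (-3:ℤ) = -((3:ℕ):ℤ) by norm_num, ypow]
      have e4 : (r:ℂ)^(-4:ℤ) = ((r:ℂ)⁻¹)^4 := by rw [show (-4:ℤ) = -((4:ℕ):ℤ) by norm_num, ypow]
      have e5 : (r:ℂ)^(-5:ℤ) = ((r:ℂ)⁻¹)^5 := by rw [show (-5:ℤ) = -((5:ℕ):ℤ) by norm_num, ypow]
      have e6 : (r:ℂ)^(-6:ℤ) = ((r:ℂ)⁻¹)^6 := by rw [show (-6:ℤ) = -((6:ℕ):ℤ) by norm_num, ypow]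
      have e9 : (r:ℂ)^(-9:ℤ) = ((r:ℂ)⁻¹)^9 := by rw [show (-9:ℤ) = -((9:ℕ):ℤ) by norm_num, ypow]
      have e10 : (r:ℂ)^(-10:ℤ) = ((r:ℂ)⁻¹)^10 := by rw [show (-10:ℤ) = -((10:ℕ):ℤ) by norm_num, ypow]
      have e11 : (r:ℂ)^(-11:ℤ) = ((r:ℂ)⁻¹)^11 := by rw [show (-11:ℤ) = -((11:ℕ):ℤ) by norm_num, ypow]
      have e12 : (r:ℂ)^(-12:ℤ) = ((r:ℂ)⁻¹)^12 := by rw [show (-12:ℤ) = -((12:ℕ):ℤ) by norm_num, ypow]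
      have e13 : (r:ℂ)^(-13:ℤ) = ((r:ℂ)⁻¹)^13 := by rw [show (-13:ℤ) = -((13:ℕ):ℤ) by norm_num, ypow]
      have e14 : (r:ℂ)^(-14:ℤ) = ((r:ℂ)⁻¹)^14 := by rw [show (-14:ℤ) = -((14:ℕ):ℤ) by norm_num, ypow]
      have e15 : (r:ℂ)^(-15:ℤ) = ((r:ℂ)⁻¹)^15 := by rw [show (-15:ℤ) = -((15:ℕ):ℤ) by norm_num, ypow]
      have e16 : (r:ℂ)^(-16:ℤ) = ((r:ℂ)⁻¹)^16 := by rw [show (-16:ℤ) = -((16:ℕ):ℤ) by norm_num, ypow]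
      have e17 : (r:ℂ)^(-17:ℤ) = ((r:ℂ)⁻¹)^17 := by rw [show (-17:ℤ) = -((17:ℕ):ℤ) by norm_num, ypow]
      have e18 : (r:ℂ)^(-18:ℤ) = ((r:ℂ)⁻¹)^18 := by rw [show (-18:ℤ) = -((18:ℕ):ℤ) by norm_num, ypow]
      rw [e3, e4, e5, e6, e9, e10, e11, e12, e13, e14, e15, e16, e17, e18]
      ring
    have q1 := ((O_mul h4 (O_mul bP2 bP0 (show (-3:ℤ) + (-5:ℤ) ≤ (-8:ℤ) by norm_num)) (show (-5:ℤ) + (-8:ℤ) ≤ (-13:ℤ) by norm_num)).add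
      (O_mul (O_mon e₀ (show (-4:ℤ) ≤ (-4:ℤ) by norm_num)) (O_mul h2 bP0 (show (-7:ℤ) + (-5:ℤ) ≤ (-12:ℤ) by norm_num)) (show (-4:ℤ) + (-12:ℤ) ≤ (-13:ℤ) by norm_num))).add
      (O_mul (O_mul (O_mon e₀ (show (-4:ℤ) ≤ (-4:ℤ) by norm_num)) bM2 (show (-4:ℤ) + (-3:ℤ) ≤ (-7:ℤ) by norm_num)) h0 (show (-7:ℤ) + (-6:ℤ) ≤ (-13:ℤ) by norm_num))
    have q2 := ((O_mul h3 (O_mul bP2 bP1 (show (-3:ℤ) + (-4:ℤ) ≤ (-7:ℤ) by norm_num)) (show (-6:ℤ) + (-7:ℤ) ≤ (-13:ℤ) by norm_num)).add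
      ((O_mul bM3 (O_mul h2 bP1 (show (-7:ℤ) + (-4:ℤ) ≤ (-11:ℤ) by norm_num)) (show (-4:ℤ) + (-11:ℤ) ≤ (-13:ℤ) by norm_num)).add
        (O_mul (O_mul bM3 bM2 (show (-4:ℤ) + (-3:ℤ) ≤ (-7:ℤ) by norm_num)) h1 (show (-7:ℤ) + (-6:ℤ) ≤ (-13:ℤ) by norm_num)))).const_mul_left ((2:ℂ))
    have q3 := (O_mul h2 (((O_mul bP2 bP2 (show (-3:ℤ) + (-3:ℤ) ≤ (-6:ℤ) by norm_num)).add
      (O_mul bP2 bM2 (show (-3:ℤ) + (-3:ℤ) ≤ (-6:ℤ) by norm_num))).add (O_mul bM2 bM2 (show (-3:ℤ) + (-3:ℤ) ≤ (-6:ℤ) by norm_num)))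
      (show (-7:ℤ) + (-6:ℤ) ≤ (-13:ℤ) by norm_num)).const_mul_left ((-1:ℂ))
    have q4 := ((O_mul h3 (O_mul bP3 bP0 (show (-4:ℤ) + (-5:ℤ) ≤ (-9:ℤ) by norm_num)) (show (-6:ℤ) + (-9:ℤ) ≤ (-13:ℤ) by norm_num)).add
      ((O_mul bM3 (O_mul h3 bP0 (show (-6:ℤ) + (-5:ℤ) ≤ (-11:ℤ) by norm_num)) (show (-4:ℤ) + (-11:ℤ) ≤ (-13:ℤ) by norm_num)).add
        (O_mul (O_mul bM3 bM3 (show (-4:ℤ) + (-4:ℤ) ≤ (-8:ℤ) by norm_num)) h0 (show (-8:ℤ) + (-6:ℤ) ≤ (-13:ℤ) by norm_num)))).const_mul_left ((-1:ℂ))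
    have q5 := ((O_mul h1 (O_mul bP1 bP4 (show (-4:ℤ) + (-4:ℤ) ≤ (-8:ℤ) by norm_num)) (show (-6:ℤ) + (-8:ℤ) ≤ (-13:ℤ) by norm_num)).add
      ((O_mul bM1 (O_mul h1 bP4 (show (-6:ℤ) + (-4:ℤ) ≤ (-10:ℤ) by norm_num)) (show (-4:ℤ) + (-10:ℤ) ≤ (-13:ℤ) by norm_num)).add
        (O_mul (O_mul bM1 bM1 (show (-4:ℤ) + (-4:ℤ) ≤ (-8:ℤ) by norm_num)) h4 (show (-8:ℤ) + (-5:ℤ) ≤ (-13:ℤ) by norm_num)))).const_mul_left ((-1:ℂ))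
    have q6 := (((((O_mon (-(3*c₁^2*c₂) - 3*c₀*c₂^2 - 6*c₀*c₁*c₃ + 2*b₁*c₁*d₀ + 2*b₁*c₀*d₁ + 2*b₀*c₂*d₀ + 2*b₀*c₁*d₁ - 2*b₀*b₁*e₀ - a₀*d₀^2 + a₀*c₁*e₀) (show (-13:ℤ) ≤ (-13:ℤ) by norm_num)).add
      (O_mon (-(3*c₁*c₂^2) - 3*c₁^2*c₃ - 6*c₀*c₂*c₃ + 2*b₁*c₂*d₀ + 2*b₁*c₁*d₁ - b₁^2*e₀ + 2*b₀*c₃*d₀ + 2*b₀*c₂*d₁ - 2*a₀*d₀*d₁ + a₀*c₂*e₀) (show (-14:ℤ) ≤ (-13:ℤ) by norm_num))).add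
      (O_mon (-c₂^3 - 6*c₁*c₂*c₃ - 3*c₀*c₃^2 + 2*b₁*c₃*d₀ + 2*b₁*c₂*d₁ + 2*b₀*c₃*d₁ - a₀*d₁^2 + a₀*c₃*e₀) (show (-15:ℤ) ≤ (-13:ℤ) by norm_num))).add
      (O_mon (-(3*c₂^2*c₃) - 3*c₁*c₃^2 + 2*b₁*c₃*d₁) (show (-16:ℤ) ≤ (-13:ℤ) by norm_num))).add
      (O_mon (-(3*c₂*c₃^2)) (show (-17:ℤ) ≤ (-13:ℤ) by norm_num))).add
      (O_mon (-c₃^3) (show (-18:ℤ) ≤ (-13:ℤ) by norm_num))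
    exact heq.trans_isBigO ((((((q1.add q2).add q3).add q4).add q5).add q6).congr_left
      (fun r => by ring))
  have bCI : (fun r : ℝ => curvI Ψ₀ Ψ₁ Ψ₂ Ψ₃ Ψ₄ r) =O[atTop] fun r : ℝ => r^(-6:ℤ) :=
    ((hIF.trans (zpowR_O (by norm_num))).add bF).congr_left (fun r => by ring)
  have bCJ : (fun r : ℝ => curvJ Ψ₀ Ψ₁ Ψ₂ Ψ₃ Ψ₄ r) =O[atTop] fun r : ℝ => r^(-9:ℤ) :=
    ((hJG.trans (zpowR_O (by norm_num))).add bG).congr_left (fun r => by ring)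
  have hI3 : (fun r : ℝ => (curvI Ψ₀ Ψ₁ Ψ₂ Ψ₃ Ψ₄ r)^3 - ((3*c₀^2)*(r:ℂ)^(-6:ℤ) + (6*c₀*c₁)*(r:ℂ)^(-7:ℤ) + (3*c₁^2 + 6*c₀*c₂ - 4*b₀*d₀)*(r:ℂ)^(-8:ℤ) + (6*c₁*c₂ + 6*c₀*c₃ - 4*b₁*d₀ - 4*b₀*d₁ + a₀*e₀)*(r:ℂ)^(-9:ℤ))^3) =O[atTop] fun r : ℝ => r^(-22:ℤ) := by
    have inner := ((O_mul bCI bCI (show (-6:ℤ) + (-6:ℤ) ≤ (-12:ℤ) by norm_num)).add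
      (O_mul bCI bF (show (-6:ℤ) + (-6:ℤ) ≤ (-12:ℤ) by norm_num))).add (O_mul bF bF (show (-6:ℤ) + (-6:ℤ) ≤ (-12:ℤ) by norm_num))
    refine (O_mul hIF inner (show (-10:ℤ) + (-12:ℤ) ≤ (-22:ℤ) by norm_num)).congr_left (fun r => ?_)
    generalize ((3*c₀^2)*(r:ℂ)^(-6:ℤ) + (6*c₀*c₁)*(r:ℂ)^(-7:ℤ) + (3*c₁^2 + 6*c₀*c₂ - 4*b₀*d₀)*(r:ℂ)^(-8:ℤ) + (6*c₁*c₂ + 6*c₀*c₃ - 4*b₁*d₀ - 4*b₀*d₁ + a₀*e₀)*(r:ℂ)^(-9:ℤ)) = A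
    generalize (curvI Ψ₀ Ψ₁ Ψ₂ Ψ₃ Ψ₄ r) = B
    ring
  have hJ2 : (fun r : ℝ => (curvJ Ψ₀ Ψ₁ Ψ₂ Ψ₃ Ψ₄ r)^2 - ((-c₀^3)*(r:ℂ)^(-9:ℤ) + (-(3*c₀^2*c₁))*(r:ℂ)^(-10:ℤ) + (-(3*c₀*c₁^2) - 3*c₀^2*c₂ + 2*b₀*c₀*d₀)*(r:ℂ)^(-11:ℤ) + (-c₁^3 - 6*c₀*c₁*c₂ - 3*c₀^2*c₃ + 2*b₁*c₀*d₀ + 2*b₀*c₁*d₀ + 2*b₀*c₀*d₁ - b₀^2*e₀ + a₀*c₀*e₀)*(r:ℂ)^(-12:ℤ))^2) =O[atTop] fun r : ℝ => r^(-22:ℤ) := by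
    refine (O_mul hJG (bCJ.add bG) (show (-13:ℤ) + (-9:ℤ) ≤ (-22:ℤ) by norm_num)).congr_left (fun r => ?_)
    generalize ((-c₀^3)*(r:ℂ)^(-9:ℤ) + (-(3*c₀^2*c₁))*(r:ℂ)^(-10:ℤ) + (-(3*c₀*c₁^2) - 3*c₀^2*c₂ + 2*b₀*c₀*d₀)*(r:ℂ)^(-11:ℤ) + (-c₁^3 - 6*c₀*c₁*c₂ - 3*c₀^2*c₃ + 2*b₁*c₀*d₀ + 2*b₀*c₁*d₀ + 2*b₀*c₀*d₁ - b₀^2*e₀ + a₀*c₀*e₀)*(r:ℂ)^(-12:ℤ)) = A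
    generalize (curvJ Ψ₀ Ψ₁ Ψ₂ Ψ₃ Ψ₄ r) = B
    ring
  have hQO := key_lemma (3*c₀^2) (6*c₀*c₁) (3*c₁^2 + 6*c₀*c₂ - 4*b₀*d₀) (6*c₁*c₂ + 6*c₀*c₃ - 4*b₁*d₀ - 4*b₀*d₁ + a₀*e₀) (-c₀^3) (-(3*c₀^2*c₁)) (-(3*c₀*c₁^2) - 3*c₀^2*c₂ + 2*b₀*c₀*d₀) (-c₁^3 - 6*c₀*c₁*c₂ - 3*c₀^2*c₃ + 2*b₁*c₀*d₀ + 2*b₀*c₁*d₀ + 2*b₀*c₀*d₁ - b₀^2*e₀ + a₀*c₀*e₀)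
    (27*(c₀ ^ 3 * e₀ * (3 * a₀ * c₀ - 2 * b₀ ^ 2))) (by ring) (by ring) (by ring) (by ring)
  have hmain : (fun r : ℝ => (curvI Ψ₀ Ψ₁ Ψ₂ Ψ₃ Ψ₄ r)^3 - 27*((curvJ Ψ₀ Ψ₁ Ψ₂ Ψ₃ Ψ₄ r)^2) - 27*(c₀ ^ 3 * e₀ * (3 * a₀ * c₀ - 2 * b₀ ^ 2))*(r:ℂ)^(-21:ℤ))
      =O[atTop] fun r : ℝ => r^(-22:ℤ) := by
    refine ((hI3.sub (hJ2.const_mul_left ((27:ℂ)))).add hQO).congr_left (fun r => ?_)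
    generalize ((3*c₀^2)*(r:ℂ)^(-6:ℤ) + (6*c₀*c₁)*(r:ℂ)^(-7:ℤ) + (3*c₁^2 + 6*c₀*c₂ - 4*b₀*d₀)*(r:ℂ)^(-8:ℤ) + (6*c₁*c₂ + 6*c₀*c₃ - 4*b₁*d₀ - 4*b₀*d₁ + a₀*e₀)*(r:ℂ)^(-9:ℤ)) = A
    generalize ((-c₀^3)*(r:ℂ)^(-9:ℤ) + (-(3*c₀^2*c₁))*(r:ℂ)^(-10:ℤ) + (-(3*c₀*c₁^2) - 3*c₀^2*c₂ + 2*b₀*c₀*d₀)*(r:ℂ)^(-11:ℤ) + (-c₁^3 - 6*c₀*c₁*c₂ - 3*c₀^2*c₃ + 2*b₁*c₀*d₀ + 2*b₀*c₁*d₀ + 2*b₀*c₀*d₁ - b₀^2*e₀ + a₀*c₀*e₀)*(r:ℂ)^(-12:ℤ)) = B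
    ring
  have part1 : ((fun r : ℝ => (curvI Ψ₀ Ψ₁ Ψ₂ Ψ₃ Ψ₄ r) ^ 3 - 27 * (curvJ Ψ₀ Ψ₁ Ψ₂ Ψ₃ Ψ₄ r) ^ 2)
        =O[atTop] fun r : ℝ => r ^ (-22 : ℤ))
      ↔ c₀ ^ 3 * e₀ * (3 * a₀ * c₀ - 2 * b₀ ^ 2) = 0 := by
    constructor
    · intro hD
      have hKO : (fun r : ℝ => 27*(c₀ ^ 3 * e₀ * (3 * a₀ * c₀ - 2 * b₀ ^ 2)) * (r:ℂ)^(-21:ℤ)) =O[atTop] fun r : ℝ => r^(-22:ℤ) :=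
        (hD.sub hmain).congr_left (fun r => by ring)
      have h27 := const_zpow_eq_zero hKO
      exact (mul_eq_zero.mp h27).resolve_left (by norm_num)
    · intro hz
      exact hmain.congr_left (fun r => by rw [hz]; ring)
  refine ⟨part1, fun hc0 he0 => ?_⟩
  rw [part1]
  constructor
  · intro hz
    have hcc : c₀ ^ 3 * e₀ ≠ 0 := mul_ne_zero (pow_ne_zero 3 hc0) he0
    have hzz := (mul_eq_zero.mp hz).resolve_left hcc
    linear_combination hzz
  · intro hq
    have hzz : 3 * a₀ * c₀ - 2 * b₀ ^ 2 = 0 := by linear_combination hq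
    rw [hzz, mul_zero]
end
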